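/- Let A > 0 and y ∈ (−A, A). Then lim_{ε→0⁺} D(iy − ε; A) · D(iy; A) = 4·λ(iy;A)²/A². (That is, the left limit D⁺ of D across the upward-oriented branch cut i[−A,A] satisfies D⁺(k)·D(k) = 4λ(k;A)²/A² on the interior of the cut, where D itself equals its right limit there.) -/

import Mathlib

/-- The argument of a complex number normalized to lie in `[−π/2, 3π/2)`:
if `arg z ∈ (−π, −π/2)` we add `2π`. -/
noncomputable def argS (z : ℂ) : ℝ :=
  if Complex.arg z < -(Real.pi / 2) then Complex.arg z + 2 * Real.pi else Complex.arg z

/-- The branch `λ(k;A) = √(r₁r₂)·exp(i(φ₁+φ₂)/2)` of `(k² + A²)^{1/2}`, where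
`k − iA = r₁e^{iφ₁}`, `k + iA = r₂e^{iφ₂}` with `φ₁, φ₂ ∈ [−π/2, 3π/2)`;
its branch cut lies along the segment `i[−A,A]` and it is continuous from the
right on the cut. -/
noncomputable def lamBr (A : ℝ) (k : ℂ) : ℂ :=
  ((Real.sqrt (‖k - Complex.I * (A : ℂ)‖ * ‖k + Complex.I * (A : ℂ)‖) : ℝ) : ℂ) *
    Complex.exp (Complex.I *
      (((argS (k - Complex.I * (A : ℂ)) + argS (k + Complex.I * (A : ℂ))) / 2 : ℝ) : ℂ))

/-- `D(k;A) = 2λ(k;A)/(λ(k;A) + k)`. -/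
noncomputable def Dfun (A : ℝ) (k : ℂ) : ℂ := 2 * lamBr A k / (lamBr A k + k)

open Complex Filter

lemma abs_ofReal_mul_I (c : ℝ) : ‖((c : ℂ) * Complex.I)‖ = |c| := by
  simp [norm_mul]

/-- value of `lamBr` on the cut -/
lemma lamBr_on_cut (A y : ℝ) (hA : 0 < A) (hy : y ∈ Set.Ioo (-A) A) :
    lamBr A (Complex.I * (y : ℂ)) = (Real.sqrt ((A - y) * (A + y)) : ℂ) := by
  obtain ⟨h1, h2⟩ := hy
  have hm : Complex.I * (y : ℂ) - Complex.I * (A : ℂ) = ((y - A : ℝ) : ℂ) * Complex.I := by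
    push_cast; ring
  have hp : Complex.I * (y : ℂ) + Complex.I * (A : ℂ) = ((y + A : ℝ) : ℂ) * Complex.I := by
    push_cast; ring
  have hargm : Complex.arg (Complex.I * (y : ℂ) - Complex.I * (A : ℂ)) = -(Real.pi / 2) := by
    rw [Complex.arg_eq_neg_pi_div_two_iff, hm]
    constructor
    · simp
    · simp [h2, sub_neg]
  have hargp : Complex.arg (Complex.I * (y : ℂ) + Complex.I * (A : ℂ)) = Real.pi / 2 := by
    rw [Complex.arg_eq_pi_div_two_iff, hp]
    constructor
    · simp
    · simp; linarith
  have habsm : ‖(Complex.I * (y : ℂ) - Complex.I * (A : ℂ))‖ = A - y := by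
    rw [hm, abs_ofReal_mul_I, abs_of_neg (show y - A < 0 by linarith)]; ring
  have habsp : ‖(Complex.I * (y : ℂ) + Complex.I * (A : ℂ))‖ = A + y := by
    rw [hp, abs_ofReal_mul_I, abs_of_pos (show 0 < y + A by linarith)]; ring
  unfold lamBr argS
  rw [hargm, hargp, habsm, habsp]
  rw [if_neg (lt_irrefl _), if_neg (by linarith [Real.pi_pos] : ¬ Real.pi / 2 < -(Real.pi / 2))]
  have h0 : ((-(Real.pi / 2) + Real.pi / 2) / 2 : ℝ) = 0 := by ring
  rw [h0]
  simp

/-- the left limit of `lamBr` on the cut -/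
lemma lamBr_left_limit (A y : ℝ) (hA : 0 < A) (hy : y ∈ Set.Ioo (-A) A) :
    Filter.Tendsto (fun ε : ℝ => lamBr A (Complex.I * (y : ℂ) - (ε : ℂ)))
      (nhdsWithin 0 (Set.Ioi 0))
      (nhds (-(Real.sqrt ((A - y) * (A + y)) : ℂ))) := by
  obtain ⟨h1, h2⟩ := hy
  set k0 : ℂ := Complex.I * (y : ℂ)
  have hk : Filter.Tendsto (fun ε : ℝ => k0 - (ε : ℂ)) (nhdsWithin 0 (Set.Ioi 0)) (nhds k0) := by
    have hc : Continuous (fun ε : ℝ => k0 - (ε : ℂ)) :=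
      continuous_const.sub Complex.continuous_ofReal
    simpa using (hc.tendsto 0).mono_left nhdsWithin_le_nhds
  -- modulus part
  have habs : Filter.Tendsto
      (fun ε : ℝ => Real.sqrt (‖(k0 - (ε : ℂ) - Complex.I * (A : ℂ))‖ *
        ‖(k0 - (ε : ℂ) + Complex.I * (A : ℂ))‖))
      (nhdsWithin 0 (Set.Ioi 0)) (nhds (Real.sqrt ((A - y) * (A + y)))) := by
    have hm : ‖(k0 - Complex.I * (A : ℂ))‖ = A - y := by
      have h : k0 - Complex.I * (A : ℂ) = ((y - A : ℝ) : ℂ) * Complex.I := by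
        simp only [k0]; push_cast; ring
      rw [h, abs_ofReal_mul_I, abs_of_neg (show y - A < 0 by linarith)]; ring
    have hp : ‖(k0 + Complex.I * (A : ℂ))‖ = A + y := by
      have h : k0 + Complex.I * (A : ℂ) = ((y + A : ℝ) : ℂ) * Complex.I := by
        simp only [k0]; push_cast; ring
      rw [h, abs_ofReal_mul_I, abs_of_pos (show 0 < y + A by linarith)]; ring
    have hc : Continuous (fun z : ℂ => Real.sqrt (‖(z - Complex.I * (A : ℂ))‖ *
        ‖(z + Complex.I * (A : ℂ))‖)) := by
      apply Real.continuous_sqrt.comp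
      exact ((continuous_norm.comp (continuous_id.sub continuous_const)).mul
        (continuous_norm.comp (continuous_id.add continuous_const)))
    have := (hc.tendsto k0).comp hk
    rw [hm, hp] at this
    exact this
  -- phase part
  have hargm : Filter.Tendsto (fun ε : ℝ => argS (k0 - (ε : ℂ) - Complex.I * (A : ℂ)))
      (nhdsWithin 0 (Set.Ioi 0)) (nhds (3 * Real.pi / 2)) := by
    have hlim : Filter.Tendsto (fun ε : ℝ => Complex.arg (k0 - (ε : ℂ) - Complex.I * (A : ℂ)))
        (nhdsWithin 0 (Set.Ioi 0)) (nhds (-(Real.pi / 2))) := by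
      have hz : k0 - Complex.I * (A : ℂ) = ((y - A : ℝ) : ℂ) * Complex.I := by
        simp only [k0]; push_cast; ring
      have hmem : k0 - Complex.I * (A : ℂ) ∈ Complex.slitPlane := by
        rw [Complex.mem_slitPlane_iff, hz]
        right; simp [sub_eq_zero]; intro h; linarith
      have hk' : Filter.Tendsto (fun ε : ℝ => k0 - (ε : ℂ) - Complex.I * (A : ℂ))
          (nhdsWithin 0 (Set.Ioi 0)) (nhds (k0 - Complex.I * (A : ℂ))) := by
        have := hk.sub_const (Complex.I * (A : ℂ))
        simpa using this
      have harg : Complex.arg (k0 - Complex.I * (A : ℂ)) = -(Real.pi / 2) := by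
        rw [Complex.arg_eq_neg_pi_div_two_iff, hz]
        constructor
        · simp
        · simp [sub_neg]; linarith
      have := (Complex.continuousAt_arg hmem).tendsto.comp hk'
      rwa [harg] at this
    have hEq : ∀ ε ∈ Set.Ioi (0:ℝ), argS (k0 - (ε : ℂ) - Complex.I * (A : ℂ)) =
        Complex.arg (k0 - (ε : ℂ) - Complex.I * (A : ℂ)) + 2 * Real.pi := by
      intro ε hε
      have hre : (k0 - (ε : ℂ) - Complex.I * (A : ℂ)).re < 0 := by
        simp [k0, Set.mem_Ioi.mp hε]
      have him : (k0 - (ε : ℂ) - Complex.I * (A : ℂ)).im < 0 := by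
        simp [k0]; linarith
      have : Complex.arg (k0 - (ε : ℂ) - Complex.I * (A : ℂ)) < -(Real.pi / 2) := by
        by_contra h
        push_neg at h
        rcases Complex.neg_pi_div_two_le_arg_iff.mp h with h' | h'
        · linarith
        · linarith
      simp [argS, this]
    have hcongr : (fun ε : ℝ => argS (k0 - (ε : ℂ) - Complex.I * (A : ℂ))) =ᶠ[nhdsWithin 0 (Set.Ioi 0)]
        (fun ε : ℝ => Complex.arg (k0 - (ε : ℂ) - Complex.I * (A : ℂ)) + 2 * Real.pi) := by
      filter_upwards [self_mem_nhdsWithin] with ε hε using hEq ε hε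
    refine Filter.Tendsto.congr' hcongr.symm ?_
    have := hlim.add_const (2 * Real.pi)
    have heq : -(Real.pi / 2) + 2 * Real.pi = 3 * Real.pi / 2 := by ring
    rwa [heq] at this
  have hargp : Filter.Tendsto (fun ε : ℝ => argS (k0 - (ε : ℂ) + Complex.I * (A : ℂ)))
      (nhdsWithin 0 (Set.Ioi 0)) (nhds (Real.pi / 2)) := by
    have hz : k0 + Complex.I * (A : ℂ) = ((y + A : ℝ) : ℂ) * Complex.I := by
      simp only [k0]; push_cast; ring
    have hmem : k0 + Complex.I * (A : ℂ) ∈ Complex.slitPlane := by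
      rw [Complex.mem_slitPlane_iff, hz]
      right; simp; intro h; linarith
    have hk' : Filter.Tendsto (fun ε : ℝ => k0 - (ε : ℂ) + Complex.I * (A : ℂ))
        (nhdsWithin 0 (Set.Ioi 0)) (nhds (k0 + Complex.I * (A : ℂ))) := by
      have := hk.add_const (Complex.I * (A : ℂ))
      simpa using this
    have harg : Complex.arg (k0 + Complex.I * (A : ℂ)) = Real.pi / 2 := by
      rw [Complex.arg_eq_pi_div_two_iff, hz]
      constructor
      · simp
      · simp; linarith
    have hlim : Filter.Tendsto (fun ε : ℝ => Complex.arg (k0 - (ε : ℂ) + Complex.I * (A : ℂ)))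
        (nhdsWithin 0 (Set.Ioi 0)) (nhds (Real.pi / 2)) := by
      have := (Complex.continuousAt_arg hmem).tendsto.comp hk'
      rwa [harg] at this
    have hEq : ∀ ε ∈ Set.Ioi (0:ℝ), argS (k0 - (ε : ℂ) + Complex.I * (A : ℂ)) =
        Complex.arg (k0 - (ε : ℂ) + Complex.I * (A : ℂ)) := by
      intro ε hε
      have him : 0 ≤ (k0 - (ε : ℂ) + Complex.I * (A : ℂ)).im := by
        simp [k0]; linarith
      have : ¬ Complex.arg (k0 - (ε : ℂ) + Complex.I * (A : ℂ)) < -(Real.pi / 2) := by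
        push_neg
        exact Complex.neg_pi_div_two_le_arg_iff.mpr (Or.inr him)
      simp [argS, this]
    have hcongr : (fun ε : ℝ => argS (k0 - (ε : ℂ) + Complex.I * (A : ℂ))) =ᶠ[nhdsWithin 0 (Set.Ioi 0)]
        (fun ε : ℝ => Complex.arg (k0 - (ε : ℂ) + Complex.I * (A : ℂ))) := by
      filter_upwards [self_mem_nhdsWithin] with ε hε using hEq ε hε
    exact Filter.Tendsto.congr' hcongr.symm hlim
  -- combine
  have hphase : Filter.Tendsto
      (fun ε : ℝ => ((argS (k0 - (ε : ℂ) - Complex.I * (A : ℂ)) +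
        argS (k0 - (ε : ℂ) + Complex.I * (A : ℂ))) / 2 : ℝ))
      (nhdsWithin 0 (Set.Ioi 0)) (nhds Real.pi) := by
    have := (hargm.add hargp).div_const 2
    have heq : (3 * Real.pi / 2 + Real.pi / 2) / 2 = Real.pi := by ring
    rwa [heq] at this
  have hexp : Filter.Tendsto
      (fun ε : ℝ => Complex.exp (Complex.I *
        (((argS (k0 - (ε : ℂ) - Complex.I * (A : ℂ)) +
          argS (k0 - (ε : ℂ) + Complex.I * (A : ℂ))) / 2 : ℝ) : ℂ)))
      (nhdsWithin 0 (Set.Ioi 0)) (nhds (-1)) := by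
    have hc : Continuous (fun t : ℝ => Complex.exp (Complex.I * (t : ℂ))) :=
      Complex.continuous_exp.comp (continuous_const.mul Complex.continuous_ofReal)
    have := (hc.tendsto Real.pi).comp hphase
    have heval : Complex.exp (Complex.I * (Real.pi : ℂ)) = -1 := by
      rw [mul_comm]; exact Complex.exp_pi_mul_I
    rw [heval] at this
    exact this
  have habsC : Filter.Tendsto
      (fun ε : ℝ => ((Real.sqrt (‖(k0 - (ε : ℂ) - Complex.I * (A : ℂ))‖ *
        ‖(k0 - (ε : ℂ) + Complex.I * (A : ℂ))‖) : ℝ) : ℂ))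
      (nhdsWithin 0 (Set.Ioi 0)) (nhds ((Real.sqrt ((A - y) * (A + y)) : ℝ) : ℂ)) :=
    (Complex.continuous_ofReal.tendsto _).comp habs
  have := habsC.mul hexp
  simp only [mul_neg_one] at this
  exact this

/-- Jump of `D(k;A)` across the interior of the branch cut `i[−A,A]`:
for `y ∈ (−A,A)`, `lim_{ε→0⁺} D(iy − ε;A) · D(iy;A) = 4λ(iy;A)²/A²`, i.e. the left limit
`D⁺` satisfies `D⁺(k)·D(k) = 4λ(k;A)²/A²` (the value of `D` on the cut being its
right limit there). -/
theorem Dfun_jump (A y : ℝ) (hA : 0 < A) (hy : y ∈ Set.Ioo (-A) A) :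
    Filter.Tendsto
      (fun ε : ℝ => Dfun A (Complex.I * (y : ℂ) - (ε : ℂ)) * Dfun A (Complex.I * (y : ℂ)))
      (nhdsWithin 0 (Set.Ioi 0))
      (nhds (4 * lamBr A (Complex.I * (y : ℂ)) ^ 2 / (A : ℂ) ^ 2)) := by
  obtain ⟨h1, h2⟩ := hy
  set s : ℝ := Real.sqrt ((A - y) * (A + y)) with hs_def
  have hs_pos : 0 < s := Real.sqrt_pos.mpr (by nlinarith)
  have hs_sq : (s : ℝ) ^ 2 = (A - y) * (A + y) := Real.sq_sqrt (by nlinarith)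
  have hlam0 : lamBr A (Complex.I * (y : ℂ)) = (s : ℂ) := lamBr_on_cut A y hA ⟨h1, h2⟩
  have hlamlim := lamBr_left_limit A y hA ⟨h1, h2⟩
  have hk : Filter.Tendsto (fun ε : ℝ => Complex.I * (y : ℂ) - (ε : ℂ))
      (nhdsWithin 0 (Set.Ioi 0)) (nhds (Complex.I * (y : ℂ))) := by
    have hc : Continuous (fun ε : ℝ => Complex.I * (y : ℂ) - (ε : ℂ)) :=
      continuous_const.sub Complex.continuous_ofReal
    simpa using (hc.tendsto 0).mono_left nhdsWithin_le_nhds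
  have hden_ne : -(s : ℂ) + Complex.I * (y : ℂ) ≠ 0 := by
    intro h
    have : (-(s : ℂ) + Complex.I * (y : ℂ)).re = 0 := by rw [h]; simp
    simp at this
    linarith
  have hD : Filter.Tendsto (fun ε : ℝ => Dfun A (Complex.I * (y : ℂ) - (ε : ℂ)))
      (nhdsWithin 0 (Set.Ioi 0))
      (nhds (2 * (-(s : ℂ)) / (-(s : ℂ) + Complex.I * (y : ℂ)))) := by
    unfold Dfun
    exact ((tendsto_const_nhds.mul hlamlim).div (hlamlim.add hk) hden_ne)
  have := hD.mul_const (Dfun A (Complex.I * (y : ℂ)))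
  have hfinal : (2 * (-(s : ℂ)) / (-(s : ℂ) + Complex.I * (y : ℂ))) * Dfun A (Complex.I * (y : ℂ))
      = 4 * lamBr A (Complex.I * (y : ℂ)) ^ 2 / (A : ℂ) ^ 2 := by
    unfold Dfun
    rw [hlam0]
    have hden2 : (s : ℂ) + Complex.I * (y : ℂ) ≠ 0 := by
      intro h
      have : ((s : ℂ) + Complex.I * (y : ℂ)).re = 0 := by rw [h]; simp
      simp at this
      linarith
    have hA' : (A : ℂ) ≠ 0 := by exact_mod_cast hA.ne'
    have hsC : (s : ℂ) ^ 2 = (A : ℂ) ^ 2 - (y : ℂ) ^ 2 := by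
      have : (s : ℝ) ^ 2 = A ^ 2 - y ^ 2 := by rw [hs_sq]; ring
      exact_mod_cast this
    have hden_prod : (-(s : ℂ) + Complex.I * (y : ℂ)) * ((s : ℂ) + Complex.I * (y : ℂ))
        = -((A : ℂ) ^ 2) := by
      linear_combination (y : ℂ) ^ 2 * Complex.I_sq - hsC
    rw [div_mul_div_comm, hden_prod, div_neg]
    rw [neg_eq_iff_eq_neg, ← neg_div]
    congr 1
    ring
  rw [hfinal] at this
  exact this
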